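/- Let n ≥ 2 and q > 1. If K_i ∈ K_o^n (i = 1, 2, …) and K_0 ∈ K_o^n are such that K_i → K_0 in the Hausdorff metric, then lim_{i→∞} Ṽ_{γ_n,q}(K_i) = Ṽ_{γ_n,q}(K_0). -/

import Mathlib

/-! In polar coordinates the integrand becomes `r ^ (q - 1) * exp (-r ^ 2 / 2)`, so it is integrable
on all of `ℝⁿ` and dominated convergence reduces the claim to `𝟙_{K i} → 𝟙_{K₀}` almost everywhere.
This holds off the frontier of `K₀`, which is null since `K₀` is convex: points outside `closure K₀`
eventually leave `K i`, and an interior point with `ball x r ⊆ K₀` lies in every closed convex `K i`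
with Hausdorff distance `< r` from `K₀`, by separating it from `K i` with a linear functional. -/

open MeasureTheory Metric Set Filter
open scoped RealInnerProductSpace ENNReal Pointwise Topology

/-- The Gaussian dual quermassintegral `Ṽ_{γ_n,q}(K) = ∫_K e^{-|x|²/2} |x|^{q-n} dx`. -/
noncomputable def gaussDualQuermass (n : ℕ) (q : ℝ)
    (K : Set (EuclideanSpace ℝ (Fin n))) : ℝ :=
  ∫ x in K, Real.exp (-‖x‖ ^ 2 / 2) * ‖x‖ ^ (q - (n : ℝ))

section
variable {X ι : Type*} [PseudoMetricSpace X] {l : Filter ι} {K : ι → Set X} {K₀ : Set X}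

theorem eventually_notMem_of_tendsto_hausdorffDist_of_notMem_closure
    (hfin : ∀ i, hausdorffEDist (K i) K₀ ≠ ⊤)
    (hconv : Tendsto (fun i => hausdorffDist (K i) K₀) l (𝓝 0)) {x : X} (hx : x ∉ closure K₀) :
    ∀ᶠ i in l, x ∉ K i := by
  obtain ⟨ε, hε, hfar⟩ : ∃ ε > 0, ∀ y ∈ K₀, ε ≤ dist x y := by
    simpa [Metric.mem_closure_iff] using hx
  filter_upwards [hconv.eventually (gt_mem_nhds hε)] with i hi hxi
  obtain ⟨y, hy, hxy⟩ := exists_dist_lt_of_hausdorffDist_lt hxi hi (hfin i)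
  exact (hfar y hy).not_gt hxy

end

section
variable {E : Type*} [NormedAddCommGroup E] [NormedSpace ℝ E]

theorem Convex.mem_of_ball_subset_of_hausdorffDist_lt {A C : Set E} (hC : Convex ℝ C)
    (hCc : IsClosed C) (hAC : hausdorffEDist A C ≠ ⊤) {x : E} {r : ℝ}
    (hball : ball x r ⊆ A) (hd : hausdorffDist A C < r) : x ∈ C := by
  by_contra hx
  obtain ⟨f, u, hfC, hux⟩ := geometric_hahn_banach_closed_point hC hCc hx
  obtain ⟨r', hdr', hr'r⟩ := exists_between hd
  have hr' : 0 < r' := hausdorffDist_nonneg.trans_lt hdr'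
  have hr : 0 < r := hr'.trans hr'r
  obtain ⟨y₀, hy₀⟩ := exists_dist_lt_of_hausdorffDist_lt (hball (mem_ball_self hr)) hd hAC
  have hf : 0 < ‖f‖ := by
    refine norm_pos_iff.2 fun h => ?_
    have := hfC y₀ hy₀.1
    simp only [h, zero_apply] at this hux
    linarith
  obtain ⟨z, hz, hfz⟩ := f.exists_lt_apply_of_lt_opNorm
    (r := r' / r * ‖f‖) (mul_lt_of_lt_one_left hf ((div_lt_one hr).2 hr'r))
  obtain ⟨w, hw, hfw⟩ : ∃ w : E, ‖w‖ < 1 ∧ r' / r * ‖f‖ < f w := by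
    rcases lt_abs.1 (Real.norm_eq_abs (f z) ▸ hfz) with h | h
    · exact ⟨z, hz, h⟩
    · exact ⟨-z, by rwa [norm_neg], by rwa [map_neg]⟩
  have hp : x + r • w ∈ A := hball <| by
    rw [mem_ball, dist_self_add_left, norm_smul, Real.norm_of_nonneg hr.le]
    exact mul_lt_of_lt_one_right hr hw
  obtain ⟨y, hyC, hpy⟩ := exists_dist_lt_of_hausdorffDist_lt hp hdr' hAC
  have : r' * ‖f‖ < ‖f‖ * dist (x + r • w) y := calc
    r' * ‖f‖ = r * (r' / r * ‖f‖) := by field_simp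
    _ < r * f w := by gcongr
    _ < f (x + r • w) - f y := by rw [map_add, map_smul, smul_eq_mul]; linarith [hfC y hyC]
    _ ≤ ‖f‖ * dist (x + r • w) y := by
      rw [dist_eq_norm, ← map_sub]; exact (le_abs_self _).trans (f.le_opNorm _)
  nlinarith

variable {ι : Type*} {l : Filter ι} {K : ι → Set E} {K₀ : Set E}

theorem eventually_mem_of_tendsto_hausdorffDist_of_mem_interior
    (hK : ∀ i, IsClosed (K i) ∧ Convex ℝ (K i)) (hfin : ∀ i, hausdorffEDist (K i) K₀ ≠ ⊤)
    (hconv : Tendsto (fun i => hausdorffDist (K i) K₀) l (𝓝 0)) {x : E} (hx : x ∈ interior K₀) :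
    ∀ᶠ i in l, x ∈ K i := by
  obtain ⟨r, hr, hball⟩ := Metric.isOpen_iff.1 isOpen_interior x hx
  filter_upwards [hconv.eventually (gt_mem_nhds hr)] with i hi
  exact (hK i).2.mem_of_ball_subset_of_hausdorffDist_lt (hK i).1
    (hausdorffEDist_comm.trans_ne (hfin i)) (hball.trans interior_subset)
    (by rwa [hausdorffDist_comm])

theorem tendsto_indicator_of_tendsto_hausdorffDist {G : Type*} [Zero G] [TopologicalSpace G]
    (hK : ∀ i, IsClosed (K i) ∧ Convex ℝ (K i)) (hfin : ∀ i, hausdorffEDist (K i) K₀ ≠ ⊤)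
    (hconv : Tendsto (fun i => hausdorffDist (K i) K₀) l (𝓝 0)) (f : E → G) {x : E}
    (hx : x ∉ frontier K₀) :
    Tendsto (fun i => (K i).indicator f x) l (𝓝 (K₀.indicator f x)) := by
  by_cases hint : x ∈ interior K₀
  · rw [indicator_of_mem (interior_subset hint)]
    refine tendsto_const_nhds.congr' ?_
    filter_upwards [eventually_mem_of_tendsto_hausdorffDist_of_mem_interior hK hfin hconv hint]
      with i hi using (indicator_of_mem hi f).symm
  · have hcl : x ∉ closure K₀ := fun h => hx ⟨h, hint⟩
    rw [indicator_of_notMem (notMem_of_notMem_closure hcl)]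
    refine tendsto_const_nhds.congr' ?_
    filter_upwards [eventually_notMem_of_tendsto_hausdorffDist_of_notMem_closure hfin hconv hcl]
      with i hi using (indicator_of_notMem hi f).symm

variable [MeasurableSpace E] [BorelSpace E] [FiniteDimensional ℝ E] (μ : Measure E)
  [μ.IsAddHaarMeasure]

theorem tendsto_setIntegral_of_tendsto_hausdorffDist {G : Type*} [NormedAddCommGroup G]
    [NormedSpace ℝ G] [l.IsCountablyGenerated] {f : E → G} (hf : Integrable f μ)
    (hK : ∀ i, IsClosed (K i) ∧ Convex ℝ (K i)) (hK₀ : Convex ℝ K₀)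
    (hfin : ∀ i, hausdorffEDist (K i) K₀ ≠ ⊤)
    (hconv : Tendsto (fun i => hausdorffDist (K i) K₀) l (𝓝 0)) :
    Tendsto (fun i => ∫ x in K i, f x ∂μ) l (𝓝 (∫ x in K₀, f x ∂μ)) := by
  simp only [← integral_indicator (hK _).1.measurableSet,
    ← integral_indicator₀ (hK₀.nullMeasurableSet μ)]
  refine tendsto_integral_filter_of_dominated_convergence (fun x => ‖f x‖)
    (.of_forall fun i => hf.1.indicator (hK i).1.measurableSet)
    (.of_forall fun i => .of_forall fun x => norm_indicator_le_norm_self f x) hf.norm ?_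
  filter_upwards [measure_eq_zero_iff_ae_notMem.1 (hK₀.addHaar_frontier μ)] with x hx
  exact tendsto_indicator_of_tendsto_hausdorffDist hK hfin hconv f hx

theorem integrable_exp_neg_norm_sq_mul_norm_rpow {s : ℝ} (hs : -(Module.finrank ℝ E : ℝ) < s) :
    Integrable (fun x : E => Real.exp (-‖x‖ ^ 2 / 2) * ‖x‖ ^ s) μ := by
  rcases subsingleton_or_nontrivial E with hE | hE
  · exact Continuous.integrable_of_hasCompactSupport
      (continuous_of_const fun x y => by rw [Subsingleton.elim x y]) (.of_compactSpace _)
  refine (integrable_fun_norm_addHaar μ (f := fun y => Real.exp (-y ^ 2 / 2) * y ^ s)).2 ?_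
  have hd : (1 : ℕ) ≤ Module.finrank ℝ E := Module.finrank_pos
  refine (integrableOn_rpow_mul_exp_neg_mul_sq (b := 1 / 2) (by norm_num)
    (s := s + (Module.finrank ℝ E - 1 : ℕ)) (by push_cast [hd]; linarith)).congr_fun
    (fun y (hy : 0 < y) => ?_) measurableSet_Ioi
  simp only [Real.rpow_add hy, Real.rpow_natCast, smul_eq_mul]
  ring_nf

end

theorem gaussDualQuermass_continuous_general (n : ℕ) (q : ℝ) (hq : 1 < q)
    (K : ℕ → Set (EuclideanSpace ℝ (Fin n))) (K₀ : Set (EuclideanSpace ℝ (Fin n)))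
    (hK : ∀ i, IsCompact (K i) ∧ Convex ℝ (K i) ∧ (0 : EuclideanSpace ℝ (Fin n)) ∈ interior (K i))
    (hK₀ : IsCompact K₀ ∧ Convex ℝ K₀ ∧ (0 : EuclideanSpace ℝ (Fin n)) ∈ interior K₀)
    (hconv : Tendsto (fun i => Metric.hausdorffDist (K i) K₀) atTop (𝓝 0)) :
    Tendsto (fun i => gaussDualQuermass n q (K i)) atTop (𝓝 (gaussDualQuermass n q K₀)) := by
  have hfin : ∀ i, hausdorffEDist (K i) K₀ ≠ ⊤ := fun i =>
    hausdorffEDist_ne_top_of_nonempty_of_bounded ⟨0, interior_subset (hK i).2.2⟩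
      ⟨0, interior_subset hK₀.2.2⟩ (hK i).1.isBounded hK₀.1.isBounded
  have hf : Integrable fun x : EuclideanSpace ℝ (Fin n) =>
      Real.exp (-‖x‖ ^ 2 / 2) * ‖x‖ ^ (q - n) :=
    integrable_exp_neg_norm_sq_mul_norm_rpow volume (by rw [finrank_euclideanSpace_fin]; linarith)
  exact tendsto_setIntegral_of_tendsto_hausdorffDist volume hf
    (fun i => ⟨(hK i).1.isClosed, (hK i).2.1⟩) hK₀.2.1 hfin hconv

theorem gaussDualQuermass_continuous (n : ℕ) (hn : 2 ≤ n) (q : ℝ) (hq : 1 < q)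
    (K : ℕ → Set (EuclideanSpace ℝ (Fin n))) (K₀ : Set (EuclideanSpace ℝ (Fin n)))
    (hK : ∀ i, IsCompact (K i) ∧ Convex ℝ (K i) ∧ (0 : EuclideanSpace ℝ (Fin n)) ∈ interior (K i))
    (hK₀ : IsCompact K₀ ∧ Convex ℝ K₀ ∧ (0 : EuclideanSpace ℝ (Fin n)) ∈ interior K₀)
    (hconv : Tendsto (fun i => Metric.hausdorffDist (K i) K₀) atTop (𝓝 0)) :
    Tendsto (fun i => gaussDualQuermass n q (K i)) atTop (𝓝 (gaussDualQuermass n q K₀)) :=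
  gaussDualQuermass_continuous_general n q hq K K₀ hK hK₀ hconv
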